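/- arXiv:1006.1881 — 3 statements merged into one kernel-verified Lean document; each statement's English description precedes it below -/
import Mathlib

section
/- Let M ∆ M' consist of a single alternating path P of even length between two matchings M, M' of a graph with vertex partition V = V_1 ⊔ V_2. If the number of vertices of V_1 covered by M differs from the number covered by M', then one endpoint of P lies in V_1 and the other in V_2, and consequently the number |M_{12}| + |M'_{12}| of cross edges lying on P is odd. -/
open Finset
open scoped Classical symmDiff

/-- `M` is a matching of the simple graph `G`: a finite set of edges of `G`
that are pairwise vertex-disjoint. -/
def IsMatching {V : Type*} (G : SimpleGraph V) (M : Finset (Sym2 V)) : Prop :=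
  ↑M ⊆ G.edgeSet ∧ ∀ v : V, ∀ e ∈ M, ∀ f ∈ M, v ∈ e → v ∈ f → e = f

/-- `v` is covered (matched) by the edge set `M`. -/
def Covers {V : Type*} (M : Finset (Sym2 V)) (v : V) : Prop :=
  ∃ e ∈ M, v ∈ e

/-- Cross edges between `A` and `B`. -/
noncomputable def crossEdges {V : Type*} (A B : Finset V) (M : Finset (Sym2 V)) :
    Finset (Sym2 V) :=
  M.filter (fun e => (∃ v ∈ e, v ∈ A) ∧ (∃ v ∈ e, v ∈ B))

/-- Number of vertices of `A` covered by `M`. -/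
noncomputable def util {V : Type*} (A : Finset V) (M : Finset (Sym2 V)) : ℕ :=
  (A.filter (fun v => ∃ e ∈ M, v ∈ e)).card

/-!
A vertex other than the endpoints `u`, `v` of `P` is covered by `M` iff it is covered by `M'`:
off `P` the two matchings agree, and an interior vertex of `P` lies on two consecutive edges of
`P`, one from each matching. As `P` has even length, its first and last edges lie in different
matchings, so `u` is covered by exactly one of `M`, `M'` and `v` by exactly the other; hence
`util V₁ M ≠ util V₁ M'` forces `u` and `v` onto different sides. The cross edges of `M ∆ M'` are
the edges of `P` that change side, and their number is odd exactly when the endpoints of `P` lie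
on different sides.
-/

theorem util_eq_card_filter_covers {V : Type*} (A : Finset V) (M : Finset (Sym2 V)) :
    util A M = #(A.filter (Covers M)) := by
  unfold util Covers
  convert rfl

theorem util_eq_of_covers_iff {V : Type*} {A : Finset V} {M M' : Finset (Sym2 V)} {u v : V}
    (hcov : ∀ w, w ≠ u → w ≠ v → (Covers M w ↔ Covers M' w))
    (hu : Covers M u) (hu' : ¬Covers M' u) (hv : ¬Covers M v) (hv' : Covers M' v)
    (huv : u ∈ A ↔ v ∈ A) : util A M = util A M' := by
  rw [util_eq_card_filter_covers, util_eq_card_filter_covers]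
  have herase : (A.filter (Covers M)).erase u = (A.filter (Covers M')).erase v := by
    ext w
    simp only [mem_erase, mem_filter]
    by_cases hwu : w = u
    · subst hwu; tauto
    by_cases hwv : w = v
    · subst hwv; tauto
    rw [hcov w hwu hwv]
    tauto
  by_cases hA : u ∈ A
  · rw [← card_erase_add_one (mem_filter.2 ⟨hA, hu⟩),
      ← card_erase_add_one (mem_filter.2 ⟨huv.1 hA, hv'⟩), herase]
  · rw [erase_eq_of_notMem (fun hu => hA (mem_filter.1 hu).1),
      erase_eq_of_notMem (fun hv => hA (huv.2 (mem_filter.1 hv).1))] at herase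
    rw [herase]

theorem card_crossEdges_sdiff_add_card_crossEdges_sdiff {V : Type*} [DecidableEq V]
    (A B : Finset V) (M M' : Finset (Sym2 V)) :
    #(crossEdges A B (M \ M')) + #(crossEdges A B (M' \ M)) = #(crossEdges A B (M ∆ M')) := by
  rw [crossEdges, crossEdges, crossEdges,
    ← card_union_of_disjoint (disjoint_filter_filter disjoint_sdiff_sdiff), ← filter_union,
    symmDiff_def, sup_eq_union]

theorem card_crossEdges_toFinset {V : Type*} [DecidableEq V] (A B : Finset V)
    {l : List (Sym2 V)} (hl : l.Nodup) :
    #(crossEdges A B l.toFinset) = l.countP fun e => (∃ z ∈ e, z ∈ A) ∧ (∃ z ∈ e, z ∈ B) := by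
  rw [crossEdges, List.filter_toFinset, List.toFinset_card_of_nodup (hl.filter _),
    List.countP_eq_length_filter]

namespace SimpleGraph.Walk

variable {V : Type*} {G : SimpleGraph V} {u v : V} {p : G.Walk u v}

theorem IsPath.eq_or_eq_add_one_of_getVert_mem_edges (hp : p.IsPath) {i j : ℕ}
    (hj : j ≤ p.length) (hi : i < p.edges.length) (h : p.getVert j ∈ p.edges[i]) :
    j = i ∨ j = i + 1 := by
  have hi' : i < p.length := p.length_edges ▸ hi
  rw [getElem_edges, Sym2.mem_iff] at h
  rcases h with h | h
  · exact .inl (hp.getVert_injOn hj hi'.le h)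
  · exact .inr (hp.getVert_injOn hj hi' h)

theorem IsPath.eq_zero_of_start_mem_edges (hp : p.IsPath) {i : ℕ} (hi : i < p.edges.length)
    (h : u ∈ p.edges[i]) : i = 0 := by
  have h0 : p.getVert 0 ∈ p.edges[i] := by rwa [getVert_zero]
  rcases hp.eq_or_eq_add_one_of_getVert_mem_edges (Nat.zero_le _) hi h0 with h | h <;> omega

theorem IsPath.eq_length_sub_one_of_end_mem_edges (hp : p.IsPath) {i : ℕ}
    (hi : i < p.edges.length) (h : v ∈ p.edges[i]) : i = p.edges.length - 1 := by
  have hl : p.getVert p.length ∈ p.edges[i] := by rwa [getVert_length]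
  have := p.length_edges
  rcases hp.eq_or_eq_add_one_of_getVert_mem_edges le_rfl hi hl with h | h <;> omega

theorem even_countP_cross_iff {V₁ V₂ : Finset V} (hV₂ : ∀ x, x ∈ V₂ ↔ x ∉ V₁)
    (p : G.Walk u v) :
    Even (p.edges.countP fun e => (∃ z ∈ e, z ∈ V₁) ∧ (∃ z ∈ e, z ∈ V₂)) ↔
      (u ∈ V₁ ↔ v ∈ V₁) := by
  induction p with
  | nil => simp
  | @cons a w b _ q ih =>
    have hcross : ((∃ z ∈ s(a, w), z ∈ V₁) ∧ (∃ z ∈ s(a, w), z ∈ V₂)) ↔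
        ¬(a ∈ V₁ ↔ w ∈ V₁) := by
      simp only [Sym2.mem_iff, exists_eq_or_imp, exists_eq_left, hV₂]
      tauto
    rw [edges_cons, List.countP_cons]
    split_ifs with hc
    · rw [decide_eq_true_iff, hcross] at hc
      rw [Nat.even_add_one, ih]
      tauto
    · rw [decide_eq_true_iff, hcross] at hc
      rw [add_zero, ih]
      tauto

theorem odd_card_crossEdges [DecidableEq V] {V₁ V₂ : Finset V} (hV₂ : ∀ x, x ∈ V₂ ↔ x ∉ V₁)
    {M M' : Finset (Sym2 V)} (hp : p.IsTrail) (hsd : ∀ e, e ∈ p.edges ↔ e ∈ M ∆ M')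
    (huv : ¬(u ∈ V₁ ↔ v ∈ V₁)) :
    Odd (#(crossEdges V₁ V₂ (M \ M')) + #(crossEdges V₁ V₂ (M' \ M))) := by
  have hedges : M ∆ M' = p.edges.toFinset := by
    ext e
    rw [← hsd, List.mem_toFinset]
  rw [card_crossEdges_sdiff_add_card_crossEdges_sdiff, hedges,
    card_crossEdges_toFinset _ _ hp.edges_nodup, ← Nat.not_even_iff_odd,
    even_countP_cross_iff hV₂]
  exact huv

section Alternating

variable [DecidableEq V] {M M' : Finset (Sym2 V)}

def IsAlternating (p : G.Walk u v) (M M' : Finset (Sym2 V)) : Prop :=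
  (∀ e, e ∈ p.edges ↔ e ∈ M ∆ M') ∧
    ∀ k (hk : k + 1 < p.edges.length), p.edges[k] ∈ M ↔ p.edges[k + 1] ∈ M'

namespace IsAlternating

theorem mem_right_iff_notMem (h : p.IsAlternating M M') {i : ℕ} (hi : i < p.edges.length) :
    p.edges[i] ∈ M' ↔ p.edges[i] ∉ M := by
  have := (h.1 _).1 (List.getElem_mem hi)
  rw [Finset.mem_symmDiff] at this
  tauto

theorem succ_mem_iff (h : p.IsAlternating M M') {k : ℕ} (hk : k + 1 < p.edges.length) :
    p.edges[k + 1] ∈ M ↔ p.edges[k] ∉ M := by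
  rw [h.2 k hk, h.mem_right_iff_notMem hk, not_not]

theorem symm (h : p.IsAlternating M M') : p.IsAlternating M' M :=
  ⟨fun e => by rw [h.1, symmDiff_comm], fun k hk => by rw [h.mem_right_iff_notMem, h.succ_mem_iff]⟩

theorem mem_iff_even (h : p.IsAlternating M M') {i : ℕ} (hi : i < p.edges.length) :
    p.edges[i] ∈ M ↔ (p.edges[0] ∈ M ↔ Even i) := by
  induction i with
  | zero => simp
  | succ k ih => rw [h.succ_mem_iff hi, ih, Nat.even_add_one]; tauto

theorem covers_of_ne (h : p.IsAlternating M M') {w : V} (hwu : w ≠ u) (hwv : w ≠ v)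
    (hw : Covers M w) : Covers M' w := by
  obtain ⟨f, hfM, hwf⟩ := hw
  by_cases hfM' : f ∈ M'
  · exact ⟨f, hfM', hwf⟩
  obtain ⟨i, hi, rfl⟩ :=
    List.getElem_of_mem ((h.1 f).2 (Finset.mem_symmDiff.2 (.inl ⟨hfM, hfM'⟩)))
  rw [getElem_edges, Sym2.mem_iff] at hwf
  rcases hwf with rfl | rfl
  · obtain ⟨k, rfl⟩ : ∃ k, i = k + 1 :=
      Nat.exists_eq_succ_of_ne_zero fun hi0 => hwu (by rw [hi0, getVert_zero])
    refine ⟨p.edges[k], ?_, by rw [getElem_edges]; exact Sym2.mem_mk_right _ _⟩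
    rw [h.mem_right_iff_notMem, ← h.succ_mem_iff]
    exact hfM
  · have hk : i + 1 < p.edges.length := lt_of_le_of_ne hi fun hlast => hwv <| by
      rw [hlast, length_edges, getVert_length]
    exact ⟨p.edges[i + 1], (h.2 i hk).1 hfM, by rw [getElem_edges]; exact Sym2.mem_mk_left _ _⟩

theorem covers_iff_of_ne (h : p.IsAlternating M M') {w : V} (hwu : w ≠ u) (hwv : w ≠ v) :
    Covers M w ↔ Covers M' w :=
  ⟨h.covers_of_ne hwu hwv, h.symm.covers_of_ne hwu hwv⟩

theorem covers_iff_of_forall_mem_edges (h : p.IsAlternating M M') (hM' : IsMatching G M')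
    {w : V} {i : ℕ} (hi : i < p.edges.length) (hw : w ∈ p.edges[i])
    (huniq : ∀ j (hj : j < p.edges.length), w ∈ p.edges[j] → j = i) :
    Covers M w ↔ p.edges[i] ∈ M := by
  refine ⟨?_, fun hiM => ⟨_, hiM, hw⟩⟩
  rintro ⟨f, hfM, hwf⟩
  by_contra hiM
  have hfp : f ∉ p.edges := by
    intro hfp
    obtain ⟨j, hj, rfl⟩ := List.getElem_of_mem hfp
    obtain rfl := huniq j hj hwf
    exact hiM hfM
  have hfM' : f ∈ M' := by
    have := mt (h.1 f).2 hfp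
    rw [Finset.mem_symmDiff] at this
    tauto
  have hfi : f = p.edges[i] := hM'.2 w f hfM' _ ((h.mem_right_iff_notMem hi).2 hiM) hwf hw
  exact hfp (hfi ▸ List.getElem_mem hi)

theorem covers_start_iff (h : p.IsAlternating M M') (hp : p.IsPath) (hM' : IsMatching G M')
    (h0 : 0 < p.edges.length) : Covers M u ↔ p.edges[0] ∈ M :=
  h.covers_iff_of_forall_mem_edges hM' h0
    (by rw [getElem_edges, getVert_zero]; exact Sym2.mem_mk_left _ _)
    fun _ hj => hp.eq_zero_of_start_mem_edges hj

theorem covers_end_iff (h : p.IsAlternating M M') (hp : p.IsPath) (hM' : IsMatching G M')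
    (h0 : 0 < p.edges.length) : Covers M v ↔ p.edges[p.edges.length - 1] ∈ M :=
  h.covers_iff_of_forall_mem_edges hM' (by omega)
    (by
      rw [getElem_edges, Nat.sub_add_cancel h0, length_edges, getVert_length]
      exact Sym2.mem_mk_right _ _)
    fun _ hj => hp.eq_length_sub_one_of_end_mem_edges hj

theorem util_eq_of_mem_iff (h : p.IsAlternating M M') (hp : p.IsPath) (hM : IsMatching G M)
    (hM' : IsMatching G M') (heven : Even p.length) {A : Finset V} (huv : u ∈ A ↔ v ∈ A) :
    util A M = util A M' := by
  rcases Nat.eq_zero_or_pos p.edges.length with h0 | h0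
  · have : M ∆ M' = ∅ := by
      ext e
      simp [← h.1, List.eq_nil_of_length_eq_zero h0]
    rw [symmDiff_eq_bot.1 this]
  wlog hfirst : p.edges[0] ∈ M generalizing M M'
  · exact (this h.symm hM' hM ((h.mem_right_iff_notMem h0).2 hfirst)).symm
  have hlast : p.edges[p.edges.length - 1] ∉ M := by
    have hodd : ¬Even (p.edges.length - 1) := by
      rw [length_edges, Nat.not_even_iff_odd]
      exact Nat.Even.sub_odd (p.length_edges ▸ h0) heven odd_one
    rw [h.mem_iff_even]
    tauto
  refine util_eq_of_covers_iff (fun w => h.covers_iff_of_ne) ?_ ?_ ?_ ?_ huv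
  · exact (h.covers_start_iff hp hM' h0).2 hfirst
  · rw [h.symm.covers_start_iff hp hM h0, h.mem_right_iff_notMem]
    exact not_not.2 hfirst
  · rwa [h.covers_end_iff hp hM' h0]
  · rwa [h.symm.covers_end_iff hp hM h0, h.mem_right_iff_notMem]

end IsAlternating

end Alternating

end SimpleGraph.Walk

/-- If `M ∆ M'` is a single alternating path `P` of even length, and the number of
vertices of `V₁` covered by `M` differs from the number covered by `M'`, then one
endpoint of `P` lies in `V₁` and the other in `V₂`, and the number of cross edges of
`M` and `M'` lying on `P` is odd. -/
theorem stmt_6 {V : Type*} [DecidableEq V] (G : SimpleGraph V) (V₁ V₂ : Finset V)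
    (hpart : ∀ v : V, v ∈ V₁ ∨ v ∈ V₂) (hdisj : Disjoint V₁ V₂)
    (M M' : Finset (Sym2 V)) (hM : IsMatching G M) (hM' : IsMatching G M')
    (u v : V) (p : G.Walk u v) (hp : p.IsPath)
    (hsd : ∀ e : Sym2 V, e ∈ p.edges ↔ e ∈ M ∆ M')
    (halt : ∀ (k : ℕ) (hk : k + 1 < p.edges.length),
      (p.edges.get ⟨k, Nat.lt_of_succ_lt hk⟩ ∈ M ↔ p.edges.get ⟨k + 1, hk⟩ ∈ M'))
    (heven : Even p.length)
    (hneq : util V₁ M ≠ util V₁ M') :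
    ((u ∈ V₁ ∧ v ∈ V₂) ∨ (u ∈ V₂ ∧ v ∈ V₁)) ∧
    Odd ((crossEdges V₁ V₂ (M \ M')).card + (crossEdges V₁ V₂ (M' \ M)).card) := by
  have hV₂ : ∀ x, x ∈ V₂ ↔ x ∉ V₁ :=
    fun x => ⟨fun h₂ h₁ => disjoint_left.1 hdisj h₁ h₂, (hpart x).resolve_left⟩
  have hpalt : p.IsAlternating M M' := ⟨hsd, by simpa only [List.get_eq_getElem] using halt⟩
  have hsides : ¬(u ∈ V₁ ↔ v ∈ V₁) :=
    fun huv => hneq (hpalt.util_eq_of_mem_iff hp hM hM' heven huv)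
  refine ⟨?_, SimpleGraph.Walk.odd_card_crossEdges hV₂ hp.isTrail hsd hsides⟩
  rw [hV₂ u, hV₂ v]
  tauto
end

section
/- Let G be a graph with vertex partition V = V_1 ∪ … ∪ V_n, let M* be a maximum cardinality matching of G, and for each i let M_i** be a maximum cardinality matching of G[V_i]. Then there exists a matching M' of G such that M' restricts to a maximum cardinality matching on each G[V_i] and Σ_i |M'_{ii}| + (1/2) Σ_{i<j} |M'_{ij}| ≥ Σ_i |M*_{ii}| + (1/2) Σ_{i<j} |M*_{ij}|. -/
/-!
Every edge of a matching `M` is internal to one part or runs between exactly one pair of parts,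
so the objective equals `(|M| + Σᵢ |Mᵢᵢ|) / 2`. Take `M'` maximising the pair
`(|M| + Σᵢ |Mᵢᵢ|, Σᵢ |Mᵢᵢ|)` lexicographically over all matchings (there are finitely many, since
the parts cover `V`); then `M'` beats `M*` in the objective. If some `M'ᵢᵢ` were not a maximum
matching of `G[Vᵢ]`, augmenting it inside `G[Vᵢ]` covers only two new vertices, so dropping the
at most two other edges of `M'` at those vertices raises `Σᵢ |Mᵢᵢ|` by one and lowers `|M|` by at
most one, contradicting the choice of `M'`.
-/

open Finset
open scoped Classical symmDiff

/-- Internal edges of agent `i`. -/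
noncomputable def internalEdges {V : Type*} {n : ℕ} (parts : Fin n → Finset V)
    (i : Fin n) (M : Finset (Sym2 V)) : Finset (Sym2 V) :=
  M.filter (fun e => ∀ v ∈ e, v ∈ parts i)

/-- External edges of `M` between `V_i` and `V_j`. -/
noncomputable def externalEdges {V : Type*} {n : ℕ} (parts : Fin n → Finset V)
    (i j : Fin n) (M : Finset (Sym2 V)) : Finset (Sym2 V) :=
  M.filter (fun e => (∃ v ∈ e, v ∈ parts i) ∧ (∃ v ∈ e, v ∈ parts j))

section

variable {V : Type*} {G : SimpleGraph V} {M N A B : Finset (Sym2 V)} {e f : Sym2 V} {v : V}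

lemma covers_insert : Covers (insert e M) v ↔ v ∈ e ∨ Covers M v := by
  simp [Covers]

lemma covers_union : Covers (M ∪ N) v ↔ Covers M v ∨ Covers N v := by
  simp [Covers, or_and_right, exists_or]

lemma Covers.mono (h : M ⊆ N) (hv : Covers M v) : Covers N v :=
  let ⟨e, he, hve⟩ := hv
  ⟨e, h he, hve⟩

lemma notMem_of_forall_not_covers (h : ∀ v ∈ e, ¬Covers M v) : e ∉ M := fun he =>
  h _ e.out_fst_mem ⟨e, he, e.out_fst_mem⟩

namespace IsMatching

lemma eq_of_mem (hM : IsMatching G M) (he : e ∈ M) (hf : f ∈ M) (hve : v ∈ e) (hvf : v ∈ f) :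
    e = f :=
  hM.2 v e he f hf hve hvf

lemma mono {H : SimpleGraph V} (hM : IsMatching G M) (hGH : G ≤ H) : IsMatching H M :=
  ⟨hM.1.trans (SimpleGraph.edgeSet_mono hGH), hM.2⟩

lemma anti (hM : IsMatching G M) (hNM : N ⊆ M) : IsMatching G N :=
  ⟨(coe_subset.2 hNM).trans hM.1, fun v _ he _ hf => hM.2 v _ (hNM he) _ (hNM hf)⟩

lemma insert (hM : IsMatching G M) (he : e ∈ G.edgeSet) (hfree : ∀ v ∈ e, ¬Covers M v) :
    IsMatching G (insert e M) := by
  refine ⟨by simpa [Set.insert_subset_iff] using ⟨he, hM.1⟩, fun v f hf g hg hvf hvg => ?_⟩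
  rw [mem_insert] at hf hg
  rcases hf with rfl | hf <;> rcases hg with rfl | hg
  · rfl
  · exact absurd ⟨g, hg, hvg⟩ (hfree v hvf)
  · exact absurd ⟨f, hf, hvf⟩ (hfree v hvg)
  · exact hM.eq_of_mem hf hg hvf hvg

lemma union_filter_not_covers (hB : IsMatching G B) (hM : IsMatching G M) :
    IsMatching G (B ∪ M.filter fun f => ∀ v ∈ f, ¬Covers B v) := by
  refine ⟨?_, fun v e he f hf hve hvf => ?_⟩
  · rw [coe_union, coe_filter, Set.union_subset_iff]
    exact ⟨hB.1, (Set.sep_subset _ _).trans hM.1⟩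
  rw [mem_union, mem_filter] at he hf
  rcases he with he | ⟨he, he'⟩ <;> rcases hf with hf | ⟨hf, hf'⟩
  · exact hB.eq_of_mem he hf hve hvf
  · exact absurd ⟨e, he, hve⟩ (hf' v hvf)
  · exact absurd ⟨f, hf, hvf⟩ (he' v hve)
  · exact hM.eq_of_mem he hf hve hvf

lemma not_covers_erase (hM : IsMatching G M) (he : e ∈ M) (hv : v ∈ e) :
    ¬Covers (M.erase e) v := fun ⟨_, hf, hvf⟩ =>
  ne_of_mem_erase hf (hM.eq_of_mem (mem_of_mem_erase hf) he hvf hv)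

lemma not_covers_filter {p : Sym2 V → Prop} [DecidablePred p] (hM : IsMatching G M)
    (he : e ∈ M) (hv : v ∈ e) (hp : ¬p e) : ¬Covers (M.filter p) v := fun ⟨_, hf, hvf⟩ => by
  rw [mem_filter] at hf
  exact hp (hM.eq_of_mem hf.1 he hvf hv ▸ hf.2)

lemma card_filter_mem_le_one (hM : IsMatching G M) (v : V) : (M.filter (v ∈ ·)).card ≤ 1 :=
  card_le_one.2 fun e he f hf => by
    rw [mem_filter] at he hf
    exact hM.eq_of_mem he.1 hf.1 he.2 hf.2

lemma card_filter_mem_or_mem_le_two (hM : IsMatching G M) (y z : V) :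
    (M.filter fun f => y ∈ f ∨ z ∈ f).card ≤ 2 := by
  rw [filter_or]
  exact (card_union_le _ _).trans
    (add_le_add (hM.card_filter_mem_le_one y) (hM.card_filter_mem_le_one z))

lemma exists_edges_of_one_lt_card (hN : IsMatching G N) {y z : V}
    (h : 1 < (N.filter fun f => y ∈ f ∨ z ∈ f).card) :
    ∃ x w, s(x, y) ∈ N ∧ s(z, w) ∈ N ∧ s(x, y) ≠ s(z, w) := by
  have key : ∀ f ∈ N, ∀ g ∈ N, y ∈ f → z ∈ g → f ≠ g →
      ∃ x w, s(x, y) ∈ N ∧ s(z, w) ∈ N ∧ s(x, y) ≠ s(z, w) := by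
    intro f hf g hg hyf hzg hfg
    obtain ⟨x, rfl⟩ := Sym2.mem_iff_exists.1 hyf
    obtain ⟨w, rfl⟩ := Sym2.mem_iff_exists.1 hzg
    exact ⟨x, w, Sym2.eq_swap ▸ hf, hg, Sym2.eq_swap (a := y) ▸ hfg⟩
  obtain ⟨f, hf, g, hg, hfg⟩ := one_lt_card.1 h
  rw [mem_filter] at hf hg
  rcases hf with ⟨hf, hyf | hzf⟩ <;> rcases hg with ⟨hg, hyg | hzg⟩
  · exact absurd (hN.eq_of_mem hf hg hyf hyg) hfg
  · exact key f hf g hg hyf hzg hfg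
  · exact key g hg f hf hyg hzf hfg.symm
  · exact absurd (hN.eq_of_mem hf hg hzf hzg) hfg

lemma card_le_card_filter_not_covers_add (hM : IsMatching G M) (hAM : A ⊆ M) {u w : V}
    (hcov : ∀ x, Covers B x → Covers A x ∨ x = u ∨ x = w) :
    M.card ≤ (M.filter fun f => ∀ v ∈ f, ¬Covers B v).card + A.card + 2 := by
  have hsplit := card_filter_add_card_filter_not (s := M) fun f => ∀ v ∈ f, ¬Covers B v
  have hnear : (M.filter fun f => ¬∀ v ∈ f, ¬Covers B v) ⊆
      A ∪ M.filter fun f => u ∈ f ∨ w ∈ f := fun f hf => by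
    simp only [mem_filter, not_forall, not_not] at hf
    obtain ⟨hfM, v, hvf, hvB⟩ := hf
    rw [mem_union, mem_filter]
    rcases hcov v hvB with ⟨a, ha, hva⟩ | rfl | rfl
    · exact .inl (hM.eq_of_mem hfM (hAM ha) hvf hva ▸ ha)
    · exact .inr ⟨hfM, .inl hvf⟩
    · exact .inr ⟨hfM, .inr hvf⟩
  have := (card_le_card hnear).trans (card_union_le _ _)
  have := hM.card_filter_mem_or_mem_le_two u w
  omega

end IsMatching

/-- What augmenting `A` along an augmenting path with edges in `N` produces: a larger matching
whose cover exceeds that of `A` only by the two ends of the path. -/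
def IsAugmentation (A N B : Finset (Sym2 V)) : Prop :=
  IsMatching ⊤ B ∧ B ⊆ A ∪ N ∧ A.card < B.card ∧
    ∃ u w : V, ∀ x, Covers B x → Covers A x ∨ x = u ∨ x = w

namespace IsAugmentation

variable {A₀ N₀ B₀ : Finset (Sym2 V)}

lemma of_insert_of_notMem (h : IsAugmentation A (insert e N) B) (he : e ∉ B) :
    IsAugmentation A N B := by
  obtain ⟨hB, hsub, hcard, hcov⟩ := h
  refine ⟨hB, fun f hf => ?_, hcard, hcov⟩
  have := hsub hf
  simp only [mem_union, mem_insert] at this ⊢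
  rcases this with h | rfl | h
  exacts [.inl h, absurd hf he, .inr h]

lemma reinsert (h : IsAugmentation (A.erase e) N₀ B₀) (hA : IsMatching ⊤ A) (he : e ∈ A)
    (hN₀ : N₀ ⊆ N) (hfree : ∀ v ∈ e, ¬Covers (A.erase e ∪ N₀) v) :
    IsAugmentation A N (insert e B₀) := by
  obtain ⟨hB, hsub, hcard, u, w, hcov⟩ := h
  have hfreeB : ∀ v ∈ e, ¬Covers B₀ v := fun v hv hc => hfree v hv (hc.mono hsub)
  refine ⟨hB.insert (hA.1 he) hfreeB, ?_, ?_, u, w, fun x hx => ?_⟩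
  · exact insert_subset (mem_union_left _ he)
      (hsub.trans (union_subset_union (erase_subset _ _) hN₀))
  · rw [card_insert_of_notMem (notMem_of_forall_not_covers hfreeB), ← card_erase_add_one he]
    omega
  · rcases covers_insert.1 hx with hxe | hxB
    · exact .inl ⟨e, he, hxe⟩
    · exact (hcov x hxB).imp_left (Covers.mono (erase_subset _ _))

/-- The edge `s(x, w)` stands for the path `x - y - z - w` that was contracted. -/
lemma uncontract {x y z w : V} (h : IsAugmentation (A.erase s(y, z)) (insert s(x, w) N₀) B₀)
    (hxwB : s(x, w) ∈ B₀) (hN : IsMatching ⊤ N) (hyz : s(y, z) ∈ A) (hxy : s(x, y) ∈ N)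
    (hzw : s(z, w) ∈ N) (hne : s(x, y) ≠ s(z, w)) (hN₀ : N₀ ⊆ N)
    (hfree : ∀ v ∈ s(y, z), ¬Covers (A.erase s(y, z) ∪ N₀) v) :
    IsAugmentation A N (insert s(x, y) (insert s(z, w) (B₀.erase s(x, w)))) := by
  obtain ⟨hB, hsub, hcard, u, u', hcov⟩ := h
  have hsub' : B₀.erase s(x, w) ⊆ A.erase s(y, z) ∪ N₀ := fun f hf => by
    have := hsub (mem_of_mem_erase hf)
    simp only [mem_union, mem_insert] at this ⊢
    exact this.imp_right (Or.resolve_left · (ne_of_mem_erase hf))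
  have hfree' : ∀ v ∈ s(y, z), ¬Covers (B₀.erase s(x, w)) v := fun v hv hc =>
    hfree v hv (hc.mono hsub')
  have hxw : ∀ v ∈ s(x, w), ¬Covers (B₀.erase s(x, w)) v := fun _ =>
    hB.not_covers_erase hxwB
  have hfree_zw : ∀ v ∈ s(z, w), ¬Covers (B₀.erase s(x, w)) v := fun v hv => by
    rcases Sym2.mem_iff.1 hv with rfl | rfl
    exacts [hfree' _ (Sym2.mem_mk_right _ _), hxw _ (Sym2.mem_mk_right _ _)]
  have hfree_xy : ∀ v ∈ s(x, y), ¬Covers (insert s(z, w) (B₀.erase s(x, w))) v := by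
    intro v hv
    rw [covers_insert, not_or]
    refine ⟨fun hvzw => hne (hN.eq_of_mem hxy hzw hv hvzw), ?_⟩
    rcases Sym2.mem_iff.1 hv with rfl | rfl
    exacts [hxw _ (Sym2.mem_mk_left _ _), hfree' _ (Sym2.mem_mk_left _ _)]
  refine ⟨((hB.anti (erase_subset _ _)).insert (hN.1 hzw) hfree_zw).insert (hN.1 hxy) hfree_xy,
    ?_, ?_, u, u', fun t ht => ?_⟩
  · refine insert_subset (mem_union_right _ hxy) (insert_subset (mem_union_right _ hzw) ?_)
    exact hsub'.trans (union_subset_union (erase_subset _ _) hN₀)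
  · rw [card_insert_of_notMem (notMem_of_forall_not_covers hfree_xy),
      card_insert_of_notMem (notMem_of_forall_not_covers hfree_zw), card_erase_of_mem hxwB,
      ← card_erase_add_one hyz]
    omega
  · suffices Covers A t ∨ Covers B₀ t from this.elim .inl fun hB₀ =>
      (hcov t hB₀).imp_left (Covers.mono (erase_subset _ _))
    simp only [covers_insert, Sym2.mem_iff] at ht
    rcases ht with (rfl | rfl) | (rfl | rfl) | ht
    · exact .inr ⟨_, hxwB, Sym2.mem_mk_left _ _⟩
    · exact .inl ⟨_, hyz, Sym2.mem_mk_left _ _⟩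
    · exact .inl ⟨_, hyz, Sym2.mem_mk_right _ _⟩
    · exact .inr ⟨_, hxwB, Sym2.mem_mk_right _ _⟩
    · exact .inr (ht.mono (erase_subset _ _))

end IsAugmentation

/-- The augmenting-path lemma, proved by induction on `A` without paths: an edge `s(y, z)` of `A`
is either set aside, when at most one edge of `N` meets it, or contracted together with the two
edges `s(x, y)`, `s(z, w)` of `N` at its ends into the single edge `s(x, w)`. -/
theorem exists_isAugmentation (hA : IsMatching ⊤ A) (hN : IsMatching ⊤ N)
    (hlt : A.card < N.card) : ∃ B, IsAugmentation A N B := by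
  induction A using Finset.strongInduction generalizing N with
  | H A ih =>
  obtain rfl | ⟨⟨y, z⟩, hyz⟩ := A.eq_empty_or_nonempty
  · obtain ⟨⟨u, w⟩, he⟩ := card_pos.1 hlt
    have hsingle : IsMatching ⊤ {s(u, w)} := by
      simpa using (hN.anti (empty_subset N)).insert (hN.1 he) (by simp [Covers])
    exact ⟨{s(u, w)}, hsingle, by simpa using he, by simp, u, w, by simp [Covers]⟩
  change s(y, z) ∈ A at hyz
  set N₀ := N.filter fun f => ¬(y ∈ f ∨ z ∈ f)
  have hA₀ := hA.anti (erase_subset s(y, z) A)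
  have hfree : ∀ v ∈ s(y, z), ¬Covers (A.erase s(y, z) ∪ N₀) v := by
    intro v hv
    rw [covers_union, not_or]
    refine ⟨hA.not_covers_erase hyz hv, fun ⟨f, hf, hvf⟩ => (mem_filter.1 hf).2 ?_⟩
    rcases Sym2.mem_iff.1 hv with rfl | rfl
    exacts [.inl hvf, .inr hvf]
  by_cases hcard : (A.erase s(y, z)).card < N₀.card
  · obtain ⟨B₀, hB₀⟩ := ih _ (erase_ssubset hyz) hA₀ (hN.anti (filter_subset _ _)) hcard
    exact ⟨_, hB₀.reinsert hA hyz (filter_subset _ _) hfree⟩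
  have hsplit : (N.filter fun f => y ∈ f ∨ z ∈ f).card + N₀.card = N.card :=
    card_filter_add_card_filter_not _
  have hA_card := card_erase_add_one hyz
  have hN_card := hN.card_filter_mem_or_mem_le_two y z
  obtain ⟨x, w, hxy, hzw, hne⟩ := hN.exists_edges_of_one_lt_card (y := y) (z := z) (by omega)
  have hxw_free : ∀ v ∈ s(x, w), ¬Covers N₀ v := fun v hv => by
    rcases Sym2.mem_iff.1 hv with rfl | rfl
    · exact hN.not_covers_filter hxy (Sym2.mem_mk_left _ _) (by simp)
    · exact hN.not_covers_filter hzw (Sym2.mem_mk_right _ _) (by simp)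
  have hxw : s(x, w) ∈ (⊤ : SimpleGraph V).edgeSet := by
    simpa using fun hxw : x = w =>
      hne (hN.eq_of_mem hxy hzw (Sym2.mem_mk_left _ _) (hxw ▸ Sym2.mem_mk_right _ _))
  obtain ⟨B₀, hB₀⟩ := ih _ (erase_ssubset hyz) hA₀
    ((hN.anti (filter_subset _ _)).insert hxw hxw_free)
    (by rw [card_insert_of_notMem (notMem_of_forall_not_covers hxw_free)]; omega)
  by_cases hxwB : s(x, w) ∈ B₀
  · exact ⟨_, hB₀.uncontract hxwB hN hyz hxy hzw hne (filter_subset _ _) hfree⟩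
  · exact ⟨_, (hB₀.of_insert_of_notMem hxwB).reinsert hA hyz (filter_subset _ _) hfree⟩

section Partition

variable {n : ℕ}

noncomputable def internalCount (parts : Fin n → Finset V) (M : Finset (Sym2 V)) : ℕ :=
  ∑ i, (internalEdges parts i M).card

lemma card_filter_eq_add_card_filter_lt_eq_one (a b : Fin n) :
    (univ.filter fun i => a = i ∧ b = i).card +
      (univ.filter fun q : Fin n × Fin n =>
        q.1 < q.2 ∧ (a = q.1 ∨ b = q.1) ∧ (a = q.2 ∨ b = q.2)).card = 1 := by
  rcases lt_trichotomy a b with h | rfl | h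
  · rw [filter_eq_empty_iff.2 (by grind), card_empty, zero_add, card_eq_one]
    exact ⟨(a, b), by ext; simp; grind⟩
  · rw [card_eq_one.2 ⟨a, by ext; simp [eq_comm]⟩, filter_eq_empty_iff.2 (by grind), card_empty]
  · rw [filter_eq_empty_iff.2 (by grind), card_empty, zero_add, card_eq_one]
    exact ⟨(b, a), by ext; simp; grind⟩

variable {parts : Fin n → Finset V}

lemma card_filter_internal_add_card_filter_external_eq_one (hpart : ∀ v : V, ∃! i : Fin n, v ∈ parts i)
    (e : Sym2 V) :
    (univ.filter fun i => ∀ v ∈ e, v ∈ parts i).card +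
      ((univ.filter fun q : Fin n × Fin n => q.1 < q.2).filter fun q =>
        (∃ v ∈ e, v ∈ parts q.1) ∧ (∃ v ∈ e, v ∈ parts q.2)).card = 1 := by
  choose p hp using hpart
  have hmem : ∀ v i, v ∈ parts i ↔ p v = i := fun v i =>
    ⟨fun h => ((hp v).2 i h).symm, fun h => h ▸ (hp v).1⟩
  induction e using Sym2.ind with
  | _ x y => simpa [hmem, filter_filter] using card_filter_eq_add_card_filter_lt_eq_one (p x) (p y)

lemma internalCount_add_sum_card_externalEdges (hpart : ∀ v : V, ∃! i : Fin n, v ∈ parts i)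
    (M : Finset (Sym2 V)) :
    internalCount parts M + ∑ q ∈ univ.filter (fun q : Fin n × Fin n => q.1 < q.2),
      (externalEdges parts q.1 q.2 M).card = M.card := by
  simp only [internalCount, internalEdges, externalEdges, card_filter]
  rw [sum_comm, sum_comm (s := univ.filter _), ← sum_add_distrib, card_eq_sum_ones]
  refine sum_congr rfl fun e _ => ?_
  rw [← card_filter, ← card_filter]
  exact card_filter_internal_add_card_filter_external_eq_one hpart e

lemma sum_card_internalEdges_add_half_sum_card_externalEdges
    (hpart : ∀ v : V, ∃! i : Fin n, v ∈ parts i) (M : Finset (Sym2 V)) :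
    (∑ i : Fin n, ((internalEdges parts i M).card : ℚ)) +
        (1 / 2) * ∑ q ∈ Finset.univ.filter (fun q : Fin n × Fin n => q.1 < q.2),
          ((externalEdges parts q.1 q.2 M).card : ℚ) =
      (M.card + internalCount parts M) / 2 := by
  have h := congrArg (Nat.cast : ℕ → ℚ) (internalCount_add_sum_card_externalEdges hpart M)
  rw [internalCount] at h ⊢
  push_cast at h ⊢
  linarith

/-- Replace `Mᵢᵢ` by its augmentation `B` and drop the at most two other edges of `M` at the
vertices newly covered by `B`. -/
theorem exists_internalCount_lt (hdisj : Pairwise fun i j => Disjoint (parts i) (parts j))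
    (hM : IsMatching G M) (hN : IsMatching G N) {i : Fin n} (hNi : ∀ e ∈ N, ∀ v ∈ e, v ∈ parts i)
    (hlt : (internalEdges parts i M).card < N.card) :
    ∃ M₂, IsMatching G M₂ ∧ M.card + internalCount parts M ≤ M₂.card + internalCount parts M₂ ∧
      internalCount parts M < internalCount parts M₂ := by
  generalize hA : internalEdges parts i M = A at hlt
  have hAM : A ⊆ M := hA ▸ filter_subset _ _
  obtain ⟨B, hB, hBsub, hBcard, u, w, hcov⟩ :=
    exists_isAugmentation ((hM.anti hAM).mono le_top) (hN.mono le_top) hlt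
  have hBi : ∀ f ∈ B, ∀ v ∈ f, v ∈ parts i := fun f hf =>
    (mem_union.1 (hBsub hf)).elim (fun h => (mem_filter.1 (hA ▸ h)).2) (hNi f)
  have hBG : IsMatching G B :=
    ⟨fun f hf => (mem_union.1 (hBsub hf)).elim (fun h => hM.1 (hAM h)) (fun h => hN.1 h), hB.2⟩
  set far := M.filter fun f => ∀ v ∈ f, ¬Covers B v
  have hdisjB : Disjoint B far := disjoint_right.2 fun f hf hfB =>
    (mem_filter.1 hf).2 _ f.out_fst_mem ⟨f, hfB, f.out_fst_mem⟩
  have hB_int : B ⊆ internalEdges parts i (B ∪ far) := fun f hf =>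
    mem_filter.2 ⟨mem_union_left _ hf, hBi f hf⟩
  have hfar_int : ∀ j ∈ univ.erase i,
      internalEdges parts j M ⊆ internalEdges parts j (B ∪ far) := fun j hj f hf => by
    obtain ⟨hfM, hfj⟩ := mem_filter.1 hf
    refine mem_filter.2 ⟨mem_union_right _ (mem_filter.2 ⟨hfM, ?_⟩), hfj⟩
    exact fun v hv ⟨g, hg, hvg⟩ =>
      disjoint_left.1 (hdisj (ne_of_mem_erase hj)) (hfj v hv) (hBi g hg v hvg)
  have hcount : internalCount parts M + B.card ≤ internalCount parts (B ∪ far) + A.card := by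
    rw [internalCount, internalCount, ← add_sum_erase _ _ (mem_univ i),
      ← add_sum_erase _ _ (mem_univ i), hA]
    have := sum_le_sum fun j hj => card_le_card (hfar_int j hj)
    have := card_le_card hB_int
    omega
  have hcard : M.card ≤ far.card + A.card + 2 := hM.card_le_card_filter_not_covers_add hAM hcov
  refine ⟨B ∪ far, hBG.union_filter_not_covers hM, ?_, by omega⟩
  rw [card_union_of_disjoint hdisjB]
  omega

end Partition

end

theorem stmt_7_general {V : Type*} {n : ℕ} (G : SimpleGraph V)
    (parts : Fin n → Finset V)
    (hpart : ∀ v : V, ∃! i : Fin n, v ∈ parts i)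
    (Mstar : Finset (Sym2 V)) (hMstar : IsMatching G Mstar) :
    ∃ M' : Finset (Sym2 V), IsMatching G M' ∧
      (∀ i : Fin n, ∀ N : Finset (Sym2 V), IsMatching G N →
        (∀ e ∈ N, ∀ v ∈ e, v ∈ parts i) → N.card ≤ (internalEdges parts i M').card) ∧
      (∑ i : Fin n, ((internalEdges parts i M').card : ℚ)) +
        (1 / 2) * ∑ q ∈ Finset.univ.filter (fun q : Fin n × Fin n => q.1 < q.2),
          ((externalEdges parts q.1 q.2 M').card : ℚ) ≥
      (∑ i : Fin n, ((internalEdges parts i Mstar).card : ℚ)) +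
        (1 / 2) * ∑ q ∈ Finset.univ.filter (fun q : Fin n × Fin n => q.1 < q.2),
          ((externalEdges parts q.1 q.2 Mstar).card : ℚ) := by
  have : Finite V := Finite.of_surjective (fun x : Σ i, parts i => (x.2 : V)) fun v =>
    let ⟨i, hi, _⟩ := hpart v
    ⟨⟨i, v, hi⟩, rfl⟩
  have : Fintype V := Fintype.ofFinite V
  have hdisj : Pairwise fun i j => Disjoint (parts i) (parts j) := fun _ _ hij =>
    disjoint_left.2 fun v hi hj => hij ((hpart v).unique hi hj)
  obtain ⟨M', hM', hmax⟩ := (univ.filter (IsMatching G)).exists_max_image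
    (fun M => toLex (M.card + internalCount parts M, internalCount parts M))
    ⟨Mstar, by simpa using hMstar⟩
  simp only [mem_filter, mem_univ, true_and] at hM' hmax
  refine ⟨M', hM', fun i N hN hNi => ?_, ?_⟩
  · by_contra! hlt
    obtain ⟨M₂, hM₂, hle, hlt'⟩ := exists_internalCount_lt hdisj hM' hN hNi hlt
    exact (hmax M₂ hM₂).not_gt (Prod.Lex.toLex_lt_toLex'.2 ⟨hle, fun _ => hlt'⟩)
  · have h : ((Mstar.card + internalCount parts Mstar : ℕ) : ℚ) ≤
        (M'.card + internalCount parts M' : ℕ) :=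
      Nat.cast_le.2 (Prod.Lex.toLex_le_toLex'.1 (hmax Mstar hMstar)).1
    rw [ge_iff_le, sum_card_internalEdges_add_half_sum_card_externalEdges hpart,
      sum_card_internalEdges_add_half_sum_card_externalEdges hpart]
    push_cast at h
    linarith

/-- Given a maximum matching `M*`, there is a matching `M'` restricting to a maximum
matching on each `G[Vᵢ]` with
`Σᵢ|M'ᵢᵢ| + ½ Σ_{i<j}|M'ᵢⱼ| ≥ Σᵢ|M*ᵢᵢ| + ½ Σ_{i<j}|M*ᵢⱼ|`. -/
theorem stmt_7 {V : Type*} [DecidableEq V] {n : ℕ} (G : SimpleGraph V)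
    (parts : Fin n → Finset V)
    (hpart : ∀ v : V, ∃! i : Fin n, v ∈ parts i)
    (Mstar : Finset (Sym2 V)) (hMstar : IsMatching G Mstar)
    (hmax : ∀ N : Finset (Sym2 V), IsMatching G N → N.card ≤ Mstar.card) :
    ∃ M' : Finset (Sym2 V), IsMatching G M' ∧
      (∀ i : Fin n, ∀ N : Finset (Sym2 V), IsMatching G N →
        (∀ e ∈ N, ∀ v ∈ e, v ∈ parts i) → N.card ≤ (internalEdges parts i M').card) ∧
      (∑ i : Fin n, ((internalEdges parts i M').card : ℚ)) +
        (1 / 2) * ∑ q ∈ Finset.univ.filter (fun q : Fin n × Fin n => q.1 < q.2),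
          ((externalEdges parts q.1 q.2 M').card : ℚ) ≥
      (∑ i : Fin n, ((internalEdges parts i Mstar).card : ℚ)) +
        (1 / 2) * ∑ q ∈ Finset.univ.filter (fun q : Fin n × Fin n => q.1 < q.2),
          ((externalEdges parts q.1 q.2 Mstar).card : ℚ) :=
  stmt_7_general G parts hpart Mstar hMstar
end

section
/- The Mix-and-Match mechanism provides a 2-approximation to the maximum matching: for any graph G with vertex partition V = V_1 ∪ … ∪ V_n, the expectation over a uniformly random bipartition Π of the size of a maximum matching among matchings that (i) restrict to maximum matchings on each G[V_i] and (ii) contain no edge between V_i and V_j with i, j on the same side of Π, is at least |M*|/2, where M* is a maximum matching of G. -/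
open Finset
open scoped Classical symmDiff

/-- `M` is `π`-feasible: it is a matching of `G`, restricts to a maximum cardinality
matching inside each `Vᵢ`, and contains no edge between `Vᵢ` and `Vⱼ` for distinct
`i, j` on the same side of the bipartition `π`. -/
def Feasible {V : Type*} {n : ℕ} (G : SimpleGraph V) (parts : Fin n → Finset V)
    (π : Fin n → Bool) (M : Finset (Sym2 V)) : Prop :=
  IsMatching G M ∧
  (∀ i : Fin n, ∀ N : Finset (Sym2 V), IsMatching G N →
    (∀ e ∈ N, ∀ v ∈ e, v ∈ parts i) →
    N.card ≤ (M.filter (fun e => ∀ v ∈ e, v ∈ parts i)).card) ∧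
  (∀ i j : Fin n, i ≠ j → π i = π j → ∀ e ∈ M,
    ¬ ((∃ v ∈ e, v ∈ parts i) ∧ (∃ v ∈ e, v ∈ parts j)))


/-!
Fix a maximum matching `M i` inside every part `Vᵢ` and let `B` be their union, a matching
that is part of every candidate below. Let `S` be the edges of `M*` whose endpoints are both
uncovered by `B`. By maximality of the `M i`, every edge of `S` joins two different parts, so
it may be added to `B` under `π` exactly when those two parts lie on opposite sides of `π`,
which happens for half of all `π`. Hence the expected size of a maximum `π`-feasible matching
is at least `|B| + |S| / 2`. On the other hand each edge of `M*` outside `S` meets one of the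
at most `2 |B|` vertices covered by `B`, and distinct edges of the matching `M*` meet distinct
ones, so `|M*| ≤ 2 |B| + |S|`.
-/

section Matching

variable {V : Type*} {G : SimpleGraph V}

lemma isMatching_empty : IsMatching G ∅ := ⟨by simp, by simp⟩

lemma isMatching_singleton {e : Sym2 V} (he : e ∈ G.edgeSet) : IsMatching G {e} :=
  ⟨by simpa using he, by simp_all⟩

lemma IsMatching.subset {M N : Finset (Sym2 V)} (hM : IsMatching G M) (hNM : N ⊆ M) :
    IsMatching G N :=
  ⟨(coe_subset.2 hNM).trans hM.1, fun v e he f hf => hM.2 v e (hNM he) f (hNM hf)⟩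

lemma IsMatching.union {M N : Finset (Sym2 V)} (hM : IsMatching G M) (hN : IsMatching G N)
    (hMN : ∀ v, Covers M v → ¬ Covers N v) : IsMatching G (M ∪ N) := by
  refine ⟨by simpa [coe_union] using ⟨hM.1, hN.1⟩, ?_⟩
  intro v e he f hf hve hvf
  rcases mem_union.1 he with he | he <;> rcases mem_union.1 hf with hf | hf
  · exact hM.2 v e he f hf hve hvf
  · exact absurd ⟨f, hf, hvf⟩ (hMN v ⟨e, he, hve⟩)
  · exact absurd ⟨e, he, hve⟩ (hMN v ⟨f, hf, hvf⟩)
  · exact hN.2 v e he f hf hve hvf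

lemma IsMatching.biUnion {ι : Type*} [Fintype ι] {M : ι → Finset (Sym2 V)}
    (hM : ∀ i, IsMatching G (M i)) (hdisj : ∀ i j v, Covers (M i) v → Covers (M j) v → i = j) :
    IsMatching G (univ.biUnion M) := by
  refine ⟨fun e he => ?_, fun v e he f hf hve hvf => ?_⟩
  · obtain ⟨i, -, hei⟩ := mem_biUnion.1 he
    exact (hM i).1 hei
  · obtain ⟨i, -, hei⟩ := mem_biUnion.1 he
    obtain ⟨j, -, hfj⟩ := mem_biUnion.1 hf
    obtain rfl := hdisj i j v ⟨e, hei, hve⟩ ⟨f, hfj, hvf⟩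
    exact (hM i).2 v e hei f hfj hve hvf

lemma IsMatching.card_filter_meets_le {M : Finset (Sym2 V)} (hM : IsMatching G M)
    (W : Finset V) : (M.filter fun e => ∃ v ∈ W, v ∈ e).card ≤ W.card :=
  card_le_card_of_forall_subsingleton (fun e v => v ∈ e)
    (fun _ he => (mem_filter.1 he).2)
    (fun v _ e he f hf => hM.2 v e (mem_filter.1 he.1).1 f (mem_filter.1 hf.1).1 he.2 hf.2)

lemma card_biUnion_toFinset_le (B : Finset (Sym2 V)) :
    (B.biUnion Sym2.toFinset).card ≤ 2 * B.card :=
  calc (B.biUnion Sym2.toFinset).card ≤ ∑ e ∈ B, e.toFinset.card := card_biUnion_le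
    _ ≤ ∑ _e ∈ B, 2 := sum_le_sum fun _ _ => by rw [Sym2.card_toFinset]; split_ifs <;> omega
    _ = 2 * B.card := by rw [sum_const, smul_eq_mul, mul_comm]

lemma IsMatching.card_le_two_mul_add_card_filter_uncovered {M : Finset (Sym2 V)}
    (hM : IsMatching G M) (B : Finset (Sym2 V)) :
    M.card ≤ 2 * B.card + (M.filter fun e => ∀ v ∈ e, ¬ Covers B v).card := by
  have hcovered : (M.filter fun e => ¬ ∀ v ∈ e, ¬ Covers B v)
      = M.filter fun e => ∃ v ∈ B.biUnion Sym2.toFinset, v ∈ e := by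
    refine filter_congr fun e _ => ?_
    simp only [Covers, mem_biUnion, Sym2.mem_toFinset, not_forall, not_exists, not_and,
      Decidable.not_not]
    tauto
  have := hM.card_filter_meets_le (B.biUnion Sym2.toFinset)
  have := card_biUnion_toFinset_le B
  have := card_filter_add_card_filter_not (s := M) fun e => ∀ v ∈ e, ¬ Covers B v
  rw [hcovered] at *
  omega

end Matching

section MaximumMatchingIn

variable {V : Type*} {G : SimpleGraph V}

def IsMaximumMatchingIn (G : SimpleGraph V) (s : Finset V) (M : Finset (Sym2 V)) : Prop :=
  IsMatching G M ∧ M ⊆ s.sym2 ∧ ∀ N, IsMatching G N → N ⊆ s.sym2 → N.card ≤ M.card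

lemma exists_isMaximumMatchingIn (G : SimpleGraph V) (s : Finset V) :
    ∃ M, IsMaximumMatchingIn G s M := by
  obtain ⟨M, hM, hmax⟩ := exists_max_image (s.sym2.powerset.filter (IsMatching G)) card
    ⟨∅, by simp [isMatching_empty]⟩
  rw [mem_filter, mem_powerset] at hM
  exact ⟨M, hM.2, hM.1, fun N hN hNs => hmax N (by simp [hN, hNs])⟩

lemma IsMaximumMatchingIn.covers_of_adj {s : Finset V} {M : Finset (Sym2 V)}
    (hM : IsMaximumMatchingIn G s M) {a b : V} (hab : G.Adj a b) (ha : a ∈ s) (hb : b ∈ s) :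
    Covers M a ∨ Covers M b := by
  by_contra! hunc
  have hnotMem : s(a, b) ∉ M := fun he => hunc.1 ⟨_, he, Sym2.mem_mk_left a b⟩
  have haug : IsMatching G (insert s(a, b) M) := by
    rw [insert_eq]
    refine (isMatching_singleton hab).union hM.1 fun v ⟨e, he, hve⟩ => ?_
    rw [mem_singleton.1 he, Sym2.mem_iff] at hve
    rcases hve with rfl | rfl
    exacts [hunc.1, hunc.2]
  have := hM.2.2 _ haug (insert_subset (by simp [ha, hb]) hM.2.1)
  rw [card_insert_of_notMem hnotMem] at this
  omega

end MaximumMatchingIn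

section Bipartition

variable {V ι : Type*}

/-- An edge may be used under the bipartition `π` of the parts (`p v` being the part of `v`)
iff its endpoints lie in one part or in parts on opposite sides. -/
def Allowed (p : V → ι) (π : ι → Bool) (e : Sym2 V) : Prop :=
  ∀ u ∈ e, ∀ w ∈ e, π (p u) = π (p w) → p u = p w

lemma allowed_mk_iff_of_ne {p : V → ι} {π : ι → Bool} {a b : V} (hab : p a ≠ p b) :
    Allowed p π s(a, b) ↔ π (p a) ≠ π (p b) := by
  simp only [Allowed, Sym2.mem_iff, forall_eq_or_imp, forall_eq, imp_self, true_and, and_true]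
  exact ⟨fun h heq => hab (h.1 heq),
    fun h => ⟨fun heq => absurd heq h, fun heq => absurd heq.symm h⟩⟩

lemma two_mul_card_filter_apply_ne [Fintype ι] [DecidableEq ι] {i j : ι} (hij : i ≠ j) :
    2 * (univ.filter fun π : ι → Bool => π i ≠ π j).card = 2 ^ Fintype.card ι := by
  have hflip : (univ.filter fun π : ι → Bool => π i ≠ π j).card
      = (univ.filter fun π : ι → Bool => ¬ π i ≠ π j).card := by
    refine card_nbij' (fun π => Function.update π i (!π i)) (fun π => Function.update π i (!π i))
      ?_ ?_ ?_ ?_ <;> intro π <;>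
      simp [Function.update_of_ne hij.symm, Function.update_idem, Bool.eq_not_iff]
  have := card_filter_add_card_filter_not (s := (univ : Finset (ι → Bool))) fun π => π i ≠ π j
  simp only [card_univ, Fintype.card_fun, Fintype.card_bool] at this
  omega

lemma two_mul_sum_card_filter_allowed [Fintype ι] [DecidableEq ι] {p : V → ι}
    {S : Finset (Sym2 V)} (hS : ∀ a b, s(a, b) ∈ S → p a ≠ p b) :
    2 * ∑ π : ι → Bool, (S.filter (Allowed p π)).card = 2 ^ Fintype.card ι * S.card := by
  have hedge : ∀ e ∈ S, 2 * (univ.filter fun π => Allowed p π e).card = 2 ^ Fintype.card ι := by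
    intro e he
    induction e using Sym2.ind with
    | _ a b =>
      rw [← two_mul_card_filter_apply_ne (hS a b he)]
      exact congrArg _ (congrArg _ (filter_congr fun π _ => allowed_mk_iff_of_ne (hS a b he)))
  calc 2 * ∑ π : ι → Bool, (S.filter (Allowed p π)).card
      = ∑ e ∈ S, 2 * (univ.filter fun π => Allowed p π e).card := by
        simp only [card_filter, mul_sum]
        exact sum_comm
    _ = 2 ^ Fintype.card ι * S.card := by
        rw [sum_congr rfl hedge, sum_const, smul_eq_mul, mul_comm]

end Bipartition

section Feasible

variable {V : Type*} {n : ℕ} {G : SimpleGraph V} {parts : Fin n → Finset V} {p : V → Fin n}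
  {M : Fin n → Finset (Sym2 V)}

lemma apply_ne_of_not_covers_biUnion (hp : ∀ v i, v ∈ parts i ↔ p v = i)
    (hM : ∀ i, IsMaximumMatchingIn G (parts i) (M i)) {a b : V} (hab : G.Adj a b)
    (ha : ¬ Covers (univ.biUnion M) a) (hb : ¬ Covers (univ.biUnion M) b) : p a ≠ p b := by
  intro h
  have hcovers : ∀ v, Covers (M (p a)) v → Covers (univ.biUnion M) v :=
    fun v ⟨e, he, hve⟩ => ⟨e, mem_biUnion.2 ⟨_, mem_univ _, he⟩, hve⟩
  rcases (hM (p a)).covers_of_adj hab ((hp a _).2 rfl) ((hp b _).2 h.symm) with h' | h'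
  exacts [ha (hcovers a h'), hb (hcovers b h')]

lemma feasible_biUnion_union (hp : ∀ v i, v ∈ parts i ↔ p v = i)
    (hM : ∀ i, IsMaximumMatchingIn G (parts i) (M i)) {π : Fin n → Bool}
    {T : Finset (Sym2 V)} (hT : IsMatching G T)
    (hTB : ∀ e ∈ T, ∀ v ∈ e, ¬ Covers (univ.biUnion M) v) (hTπ : ∀ e ∈ T, Allowed p π e) :
    Feasible G parts π (univ.biUnion M ∪ T) := by
  have hMp : ∀ i, ∀ e ∈ M i, ∀ v ∈ e, p v = i := fun i e he v hv =>
    (hp v i).1 (mem_sym2_iff.1 ((hM i).2.1 he) v hv)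
  have hB : IsMatching G (univ.biUnion M) := IsMatching.biUnion (fun i => (hM i).1)
    fun i j v ⟨e, he, hve⟩ ⟨f, hf, hvf⟩ => (hMp i e he v hve).symm.trans (hMp j f hf v hvf)
  have hallowed : ∀ e ∈ univ.biUnion M ∪ T, Allowed p π e := by
    intro e he
    rcases mem_union.1 he with he | he
    · obtain ⟨i, -, hei⟩ := mem_biUnion.1 he
      intro u hu w hw _
      rw [hMp i e hei u hu, hMp i e hei w hw]
    · exact hTπ e he
  refine ⟨hB.union hT fun v hvB ⟨e, he, hve⟩ => hTB e he v hve hvB, fun i N hN hNi => ?_, ?_⟩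
  · refine ((hM i).2.2 N hN fun e he => mem_sym2_iff.2 (hNi e he)).trans
      (card_le_card fun e he => mem_filter.2 ⟨?_, mem_sym2_iff.1 ((hM i).2.1 he)⟩)
    exact mem_union_left _ (mem_biUnion.2 ⟨i, mem_univ i, he⟩)
  · rintro i j hij hπ e he ⟨⟨u, hu, hui⟩, ⟨w, hw, hwj⟩⟩
    rw [hp] at hui hwj
    subst hui hwj
    exact hij (hallowed e he u hu w hw hπ)

end Feasible

theorem stmt_10_general {V : Type*} {n : ℕ} (G : SimpleGraph V)
    (parts : Fin n → Finset V)
    (hpart : ∀ v : V, ∃! i : Fin n, v ∈ parts i)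
    (Mstar : Finset (Sym2 V)) (hMstar : IsMatching G Mstar)
    (Mmm : (Fin n → Bool) → Finset (Sym2 V))
    (hopt : ∀ (π : Fin n → Bool) (N : Finset (Sym2 V)),
      Feasible G parts π N → N.card ≤ (Mmm π).card) :
    (∑ π : Fin n → Bool, ((Mmm π).card : ℚ)) / 2 ^ n ≥ (Mstar.card : ℚ) / 2 := by
  choose p hpmem hpuniq using hpart
  have hp : ∀ v i, v ∈ parts i ↔ p v = i :=
    fun v i => ⟨fun h => (hpuniq v i h).symm, fun h => h ▸ hpmem v⟩
  choose M hM using fun i => exists_isMaximumMatchingIn G (parts i)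
  set B := univ.biUnion M
  set S := Mstar.filter fun e => ∀ v ∈ e, ¬ Covers B v
  have hS : ∀ e ∈ S, e ∈ Mstar ∧ ∀ v ∈ e, ¬ Covers B v := fun e he => mem_filter.1 he
  have hcross : ∀ a b, s(a, b) ∈ S → p a ≠ p b := fun a b he =>
    apply_ne_of_not_covers_biUnion hp hM (hMstar.1 (hS _ he).1)
      ((hS _ he).2 a (Sym2.mem_mk_left a b)) ((hS _ he).2 b (Sym2.mem_mk_right a b))
  have hlower : ∀ π, B.card + (S.filter (Allowed p π)).card ≤ (Mmm π).card := fun π => by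
    have hdisj : Disjoint B (S.filter (Allowed p π)) := disjoint_right.2 fun e he heB =>
      (hS e (mem_filter.1 he).1).2 _ e.out_fst_mem ⟨e, heB, e.out_fst_mem⟩
    rw [← card_union_of_disjoint hdisj]
    refine hopt π _ (feasible_biUnion_union hp hM (hMstar.subset ?_) ?_ ?_)
    · exact (filter_subset _ _).trans (filter_subset _ _)
    · exact fun e he => (hS e (mem_filter.1 he).1).2
    · exact fun e he => (mem_filter.1 he).2
  have hsum := two_mul_sum_card_filter_allowed (ι := Fin n) hcross
  have hcover : Mstar.card ≤ 2 * B.card + S.card :=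
    hMstar.card_le_two_mul_add_card_filter_uncovered B
  have hkey : 2 ^ n * Mstar.card ≤ 2 * ∑ π : Fin n → Bool, (Mmm π).card := by
    have := sum_le_sum fun π (_ : π ∈ univ) => hlower π
    rw [sum_add_distrib, sum_const, card_univ, Fintype.card_fun, Fintype.card_bool,
      Fintype.card_fin, smul_eq_mul] at this
    rw [Fintype.card_fin] at hsum
    linarith [Nat.mul_le_mul_left (2 ^ n) hcover]
  rw [ge_iff_le, div_le_div_iff₀ (by norm_num) (by positivity)]
  exact_mod_cast (by linarith : Mstar.card * 2 ^ n ≤ (∑ π : Fin n → Bool, (Mmm π).card) * 2)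

/-- Mix-and-Match is a 2-approximation: the expectation, over a uniformly random
bipartition `π` of the agents, of the size of a maximum `π`-feasible matching is at
least half the size of a maximum matching of `G`. -/
theorem stmt_10 {V : Type*} [DecidableEq V] {n : ℕ} (G : SimpleGraph V)
    (parts : Fin n → Finset V)
    (hpart : ∀ v : V, ∃! i : Fin n, v ∈ parts i)
    (Mstar : Finset (Sym2 V)) (hMstar : IsMatching G Mstar)
    (hmax : ∀ N : Finset (Sym2 V), IsMatching G N → N.card ≤ Mstar.card)
    (Mmm : (Fin n → Bool) → Finset (Sym2 V))
    (hfeas : ∀ π : Fin n → Bool, Feasible G parts π (Mmm π))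
    (hopt : ∀ (π : Fin n → Bool) (N : Finset (Sym2 V)),
      Feasible G parts π N → N.card ≤ (Mmm π).card) :
    (∑ π : Fin n → Bool, ((Mmm π).card : ℚ)) / 2 ^ n ≥ (Mstar.card : ℚ) / 2 :=
  stmt_10_general G parts hpart Mstar hMstar Mmm hopt
end
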